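/- Let G be a locally compact Hausdorff group, H a closed subgroup, and Y a locally compact Hausdorff H-space. Then the induced G-space G×_H Y is a proper G-space if and only if Y is a proper H-space. -/

import Mathlib

/-- A continuous action of `G` on `X` is *proper* if the map
`G × X → X × X, (g,x) ↦ (g • x, x)` is proper, i.e. preimages of compact sets
are compact. -/
def ProperAction (G X : Type*) [SMul G X] [TopologicalSpace G]
    [TopologicalSpace X] : Prop :=
  ∀ K : Set (X × X), IsCompact K →
    IsCompact ((fun p : G × X => (p.1 • p.2, p.2)) ⁻¹' K)

/-- The setoid on `G × Y` whose quotient is the induced space `G ×_H Y`: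
`(g, y) ∼ (g * h⁻¹, h • y)` for `h ∈ H`. -/
def indSetoid (G : Type*) [Group G] (H : Subgroup G) (Y : Type*)
    [MulAction (↥H) Y] : Setoid (G × Y) where
  r p q := ∃ h : ↥H, q.1 = p.1 * (h : G)⁻¹ ∧ q.2 = h • p.2
  iseqv := by
    constructor
    · intro p
      exact ⟨1, by simp, by simp⟩
    · rintro p q ⟨h, h1, h2⟩
      refine ⟨h⁻¹, by simp [h1], by simp [h2]⟩
    · rintro p q r ⟨h, h1, h2⟩ ⟨k, k1, k2⟩
      refine ⟨k * h, by simp [k1, h1, mul_assoc], by simp [k2, h2, mul_smul]⟩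

/-- The induced `G`-space `G ×_H Y`, i.e. the quotient of `G × Y` by the
`H`-action `h • (g, y) = (g h⁻¹, h • y)`, endowed with the quotient topology
and with `G` acting by left translation on the first coordinate. -/
abbrev IndSpace (G : Type*) [Group G] [TopologicalSpace G] (H : Subgroup G)
    (Y : Type*) [TopologicalSpace Y] [MulAction (↥H) Y] : Type _ :=
  Quotient (indSetoid G H Y)

/-- `G` acts on `G ×_H Y` by left translation in the first coordinate. -/
instance IndSpace.instMulAction (G : Type*) [Group G] [TopologicalSpace G]
    (H : Subgroup G) (Y : Type*) [TopologicalSpace Y] [MulAction (↥H) Y] :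
    MulAction G (IndSpace G H Y) where
  smul g q := Quotient.liftOn q
    (fun p => Quotient.mk (indSetoid G H Y) (g * p.1, p.2))
    (by
      rintro p q ⟨h, h1, h2⟩
      exact Quotient.sound ⟨h, by rw [h1, mul_assoc], h2⟩)
  one_smul q := by
    refine Quotient.inductionOn q ?_
    intro p
    show Quotient.mk (indSetoid G H Y) (1 * p.1, p.2) = Quotient.mk _ p
    rw [one_mul]
  mul_smul g g' q := by
    refine Quotient.inductionOn q ?_
    intro p
    show Quotient.mk (indSetoid G H Y) (g * g' * p.1, p.2)
      = Quotient.mk (indSetoid G H Y) (g * (g' * p.1), p.2)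
    rw [mul_assoc]

/-! The map `y ↦ [1, y]` is an `H`-equivariant closed embedding `Y → G ×_H Y`, and `H` is closed
in `G`, so properness of `G ×_H Y` restricts to `Y`.

Conversely, `G × Y → G ×_H Y` is an open quotient map, so every compact subset of `G ×_H Y` is
covered by the image of a compact `L ⊆ G × Y`. If `g • [a, y] = [b, y']` with `(a, y), (b, y') ∈ L`,
then `g = b h a⁻¹` for some `h ∈ H` with `h • y = y'`; properness of `Y` confines `h` to a compact
set, so `g` ranges over a compact subset of `G`. As `G ×_H Y` is Hausdorff, the preimage of a
compact set under `(g, z) ↦ (g • z, z)` is then a closed subset of a compact set. -/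

open Topology Set Function
open scoped Pointwise

theorem IsOpenMap.exists_isCompact_subset_image {X Z : Type*} [TopologicalSpace X]
    [TopologicalSpace Z] [WeaklyLocallyCompactSpace X] {f : X → Z} (hf : IsOpenMap f)
    (hs : Surjective f) {K : Set Z} (hK : IsCompact K) :
    ∃ L : Set X, IsCompact L ∧ K ⊆ f '' L := by
  choose x hx using hs
  choose N hN hNx using fun x : X => exists_compact_mem_nhds x
  have hfN : ∀ z ∈ K, f '' N (x z) ∈ 𝓝 z := fun z _ => by
    simpa only [hx z] using hf.image_mem_nhds (hNx (x z))
  obtain ⟨t, -, hKt⟩ := hK.elim_nhds_subcover (fun z => f '' N (x z)) hfN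
  refine ⟨⋃ z ∈ t, N (x z), t.isCompact_biUnion fun z _ => hN (x z), ?_⟩
  rwa [image_iUnion₂]

namespace ProperAction

variable {G X : Type*} [TopologicalSpace G] [TopologicalSpace X] [SMul G X]

theorem of_isClosedEmbedding {H Y : Type*} [TopologicalSpace H] [TopologicalSpace Y] [SMul H Y]
    (hP : ProperAction G X) {φ : H → G} {i : Y → X} (hφ : IsProperMap φ)
    (hi : IsClosedEmbedding i) (hφi : ∀ h y, i (h • y) = φ h • i y) : ProperAction H Y := by
  intro K hK
  have hK' := hP _ (hK.image (hi.continuous.prodMap hi.continuous))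
  convert (hφ.prodMap hi.isProperMap).isCompact_preimage hK' using 1
  ext ⟨h, y⟩
  simp only [mem_preimage, Prod.map_apply, ← hφi, mem_image, Prod.ext_iff,
    hi.injective.eq_iff, Prod.exists]
  exact ⟨fun hy => ⟨_, _, hy, rfl, rfl⟩, by rintro ⟨_, _, hy, rfl, rfl⟩; exact hy⟩

theorem of_exists_isCompact [T2Space X] [ContinuousSMul G X]
    (h : ∀ C : Set X, IsCompact C → ∃ M : Set G, IsCompact M ∧ ∀ g x, x ∈ C → g • x ∈ C → g ∈ M) :
    ProperAction G X := by
  intro K hK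
  obtain ⟨M, hM, hCM⟩ := h _ ((hK.image continuous_fst).union (hK.image continuous_snd))
  refine (hM.prod (hK.image continuous_snd)).of_isClosed_subset
    (hK.isClosed.preimage (continuous_smul.prodMk continuous_snd)) ?_
  rintro ⟨g, x⟩ hgx
  have hx : x ∈ Prod.snd '' K := ⟨_, hgx, rfl⟩
  exact ⟨hCM g x (.inr hx) (.inl ⟨_, hgx, rfl⟩), hx⟩

end ProperAction

namespace IndSpace

variable {G : Type*} [Group G] [TopologicalSpace G] {H : Subgroup G}
  {Y : Type*} [TopologicalSpace Y] [MulAction H Y]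

variable (G H Y) in
abbrev mk : G × Y → IndSpace G H Y := Quotient.mk (indSetoid G H Y)

theorem mk_eq_mk_iff {p q : G × Y} :
    mk G H Y p = mk G H Y q ↔ ∃ h : H, q.1 = p.1 * (h : G)⁻¹ ∧ q.2 = h • p.2 :=
  Quotient.eq

theorem smul_mk (g : G) (p : G × Y) : g • mk G H Y p = mk G H Y (g * p.1, p.2) := rfl

theorem isQuotientMap_mk : IsQuotientMap (mk G H Y) := isQuotientMap_quot_mk

theorem isOpenQuotientMap_mk [ContinuousMul G] [ContinuousConstSMul H Y] :
    IsOpenQuotientMap (mk G H Y) := by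
  refine ⟨isQuotientMap_mk.surjective, isQuotientMap_mk.continuous, fun U hU => ?_⟩
  let σ (h : H) : (G × Y) ≃ₜ (G × Y) :=
    (Homeomorph.mulRight (h : G)⁻¹).prodCongr (Homeomorph.smul h)
  have hsat : mk G H Y ⁻¹' (mk G H Y '' U) = ⋃ h : H, σ h '' U := by
    ext q
    simp only [mem_preimage, mem_image, mem_iUnion, mk_eq_mk_iff, Prod.ext_iff]
    exact ⟨fun ⟨p, hp, h, hq⟩ => ⟨h, p, hp, hq.1.symm, hq.2.symm⟩,
      fun ⟨h, p, hp, hq⟩ => ⟨p, hp, h, hq.1.symm, hq.2.symm⟩⟩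
  rw [← isQuotientMap_mk.isOpen_preimage, hsat]
  exact isOpen_iUnion fun h => (σ h).isOpenMap U hU

instance [ContinuousMul G] [ContinuousConstSMul H Y] : ContinuousSMul G (IndSpace G H Y) where
  continuous_smul := by
    rw [(IsOpenQuotientMap.id.prodMap isOpenQuotientMap_mk).isQuotientMap.continuous_iff]
    exact isQuotientMap_mk.continuous.comp
      ((continuous_fst.mul continuous_snd.fst).prodMk continuous_snd.snd)

theorem t2Space [IsTopologicalGroup G] [ContinuousSMul H Y] [T2Space Y]
    (hH : IsClosed (H : Set G)) : T2Space (IndSpace G H Y) := by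
  rw [t2Space_iff_of_isOpenQuotientMap isOpenQuotientMap_mk]
  let A : Set ((G × Y) × (G × Y)) := {x | x.2.1⁻¹ * x.1.1 ∈ H}
  have hA : IsClosed A := hH.preimage (continuous_snd.fst.inv.mul continuous_fst.fst)
  -- on `A`, the only element of `H` that can relate `x.1` to `x.2` is `x.2.1⁻¹ * x.1.1`
  let ρ (a : A) : H := ⟨a.1.2.1⁻¹ * a.1.1.1, a.2⟩
  have hρ : Continuous ρ :=
    (continuous_subtype_val.snd.fst.inv.mul continuous_subtype_val.fst.fst).subtype_mk _
  have hrel : {q : (G × Y) × (G × Y) | mk G H Y q.1 = mk G H Y q.2}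
      = Subtype.val '' {a : A | ρ a • a.1.1.2 = a.1.2.2} := by
    ext x
    constructor
    · intro hx
      obtain ⟨h, h1, h2⟩ := mk_eq_mk_iff.1 hx
      have hρh : x.2.1⁻¹ * x.1.1 = h := by rw [h1]; group
      have hxA : x ∈ A := by
        show _ ∈ H
        rw [hρh]
        exact h.2
      refine ⟨⟨x, hxA⟩, ?_, rfl⟩
      obtain rfl : ρ ⟨x, hxA⟩ = h := Subtype.ext hρh
      exact h2.symm
    · rintro ⟨a, hρa, rfl⟩
      exact mk_eq_mk_iff.2 ⟨ρ a, by simp [ρ], hρa.symm⟩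
  rw [hrel]
  exact hA.isClosedMap_subtype_val _
    (isClosed_eq (hρ.smul continuous_subtype_val.fst.snd) continuous_subtype_val.snd.snd)

variable (G H Y) in
def incl (y : Y) : IndSpace G H Y := mk G H Y (1, y)

theorem smul_incl (h : H) (y : Y) : (h : G) • incl G H Y y = incl G H Y (h • y) :=
  Quotient.sound ⟨h, by simp, rfl⟩

theorem isClosedEmbedding_incl [ContinuousSMul H Y] (hH : IsClosed (H : Set G)) :
    IsClosedEmbedding (incl G H Y) := by
  have hinj : Injective (incl G H Y) := by
    intro y y' hyy'
    obtain ⟨h, h1, rfl⟩ := mk_eq_mk_iff.1 hyy'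
    obtain rfl : h = 1 := Subtype.ext (by simpa using h1.symm)
    exact (one_smul H y).symm
  refine .of_continuous_injective_isClosedMap
    (isQuotientMap_mk.continuous.comp (continuous_const.prodMk continuous_id)) hinj fun F hF => ?_
  -- `(g, y)` is equivalent to `(1, f)` exactly when `g ∈ H` and `f = g • y`
  have hsat : mk G H Y ⁻¹' (incl G H Y '' F)
      = Prod.map Subtype.val id '' {p : H × Y | p.1 • p.2 ∈ F} := by
    ext ⟨g, y⟩
    simp only [incl, mem_preimage, mem_image, mem_ofPred_eq, mk_eq_mk_iff, Prod.map, id,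
      Prod.ext_iff, Prod.exists]
    constructor
    · rintro ⟨f, hf, h, h1, rfl⟩
      refine ⟨h⁻¹, h • f, ?_, by simpa using h1.symm, rfl⟩
      rwa [inv_smul_smul]
    · rintro ⟨h, y, hy, rfl, rfl⟩
      exact ⟨h • y, hy, h⁻¹, by simp, by simp⟩
  rw [← isQuotientMap_mk.isClosed_preimage, hsat]
  exact (hH.isClosedEmbedding_subtypeVal.isProperMap.prodMap isProperMap_id).isClosedMap _
    (hF.preimage continuous_smul)

theorem exists_isCompact_of_smul_mem [IsTopologicalGroup G] (hP : ProperAction H Y)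
    {L : Set (G × Y)} (hL : IsCompact L) :
    ∃ M : Set G, IsCompact M ∧ ∀ g z, z ∈ mk G H Y '' L → g • z ∈ mk G H Y '' L → g ∈ M := by
  have hL₁ : IsCompact (Prod.fst '' L) := hL.image continuous_fst
  have hL₂ : IsCompact (Prod.snd '' L) := hL.image continuous_snd
  let R : Set H := Prod.fst '' ((fun p : H × Y => (p.1 • p.2, p.2)) ⁻¹'
    ((Prod.snd '' L) ×ˢ (Prod.snd '' L)))
  have hR : IsCompact R := (hP _ (hL₂.prod hL₂)).image continuous_fst
  refine ⟨Prod.fst '' L * Subtype.val '' R * (Prod.fst '' L)⁻¹,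
    (hL₁.mul (hR.image continuous_subtype_val)).mul hL₁.inv, ?_⟩
  rintro g _ ⟨⟨a, y⟩, hay, rfl⟩ ⟨⟨b, y'⟩, hby', hgz⟩
  obtain ⟨h, hb, hy'⟩ : ∃ h : H, b = g * a * (h : G)⁻¹ ∧ y' = h • y :=
    mk_eq_mk_iff.1 ((smul_mk g (a, y)).symm.trans hgz.symm)
  have hhy : h • y ∈ Prod.snd '' L := hy' ▸ mem_image_of_mem _ hby'
  have hhR : h ∈ R := ⟨(h, y), ⟨hhy, mem_image_of_mem _ hay⟩, rfl⟩
  have hg : g = b * h * a⁻¹ := by rw [hb]; group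
  exact hg ▸ mul_mem_mul (mul_mem_mul (mem_image_of_mem _ hby') (mem_image_of_mem _ hhR))
    (inv_mem_inv.2 (mem_image_of_mem _ hay))

end IndSpace

theorem indSpace_properAction_iff_general
    (G : Type*) [Group G] [TopologicalSpace G] [IsTopologicalGroup G]
    [LocallyCompactSpace G]
    (H : Subgroup G) (hH : IsClosed (H : Set G))
    (Y : Type*) [TopologicalSpace Y] [LocallyCompactSpace Y] [T2Space Y]
    [MulAction (↥H) Y] [ContinuousSMul (↥H) Y] :
    ProperAction G (IndSpace G H Y) ↔ ProperAction (↥H) Y := by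
  refine ⟨fun hP => hP.of_isClosedEmbedding hH.isClosedEmbedding_subtypeVal.isProperMap
    (IndSpace.isClosedEmbedding_incl hH) fun h y => (IndSpace.smul_incl h y).symm, fun hP => ?_⟩
  have := IndSpace.t2Space (Y := Y) hH
  refine ProperAction.of_exists_isCompact fun C hC => ?_
  obtain ⟨L, hL, hCL⟩ := IndSpace.isOpenQuotientMap_mk.isOpenMap.exists_isCompact_subset_image
    IndSpace.isOpenQuotientMap_mk.surjective hC
  obtain ⟨M, hM, hLM⟩ := IndSpace.exists_isCompact_of_smul_mem hP hL
  exact ⟨M, hM, fun g z hz hgz => hLM g z (hCL hz) (hCL hgz)⟩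

/-- Let `G` be a locally compact Hausdorff group, `H` a closed subgroup, and
`Y` a locally compact Hausdorff `H`-space.  Then the induced `G`-space
`G ×_H Y` is a proper `G`-space if and only if `Y` is a proper `H`-space. -/
theorem indSpace_properAction_iff
    (G : Type*) [Group G] [TopologicalSpace G] [IsTopologicalGroup G]
    [LocallyCompactSpace G] [T2Space G]
    (H : Subgroup G) (hH : IsClosed (H : Set G))
    (Y : Type*) [TopologicalSpace Y] [LocallyCompactSpace Y] [T2Space Y]
    [MulAction (↥H) Y] [ContinuousSMul (↥H) Y] :
    ProperAction G (IndSpace G H Y) ↔ ProperAction (↥H) Y :=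
  indSpace_properAction_iff_general G H hH Y
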